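/- Let I_A and I_B be two MatP instances on the same bipartite graph G = (W ∪ F, E) that differ only in the preference order of a single agent x, let e = {x,y} ∈ E, and let I_H be a hybrid instance of (I_A, I_B) with respect to e. If M is a matching with e ∈ M and M is popular for both I_A and I_B, then M is popular for I_H. -/
import Mathlib


open Classical

/-- An instance of matching under preferences (MatP): a bipartite graph on
workers `W` and firms `F` together with, for each agent, a strict linear order
on its neighbors (`pref x y z` means `x` strictly prefers `y` to `z`). -/
structure MatP (α : Type*) where
  W : Finset α
  F : Finset α
  disjWF : Disjoint W F
  adj : α → α → Prop
  adj_symm : ∀ x y, adj x y → adj y x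
  adj_loopless : ∀ x, ¬ adj x x
  adj_bipartite : ∀ x y, adj x y → (x ∈ W ∧ y ∈ F) ∨ (x ∈ F ∧ y ∈ W)
  pref : α → α → α → Prop
  pref_adj : ∀ x y z, pref x y z → adj x y ∧ adj x z
  pref_trans : ∀ x y z w, pref x y z → pref x z w → pref x y w
  pref_irrefl : ∀ x y, ¬ pref x y y
  pref_total : ∀ x y z, adj x y → adj x z → y ≠ z → pref x y z ∨ pref x z y

/-- `M` is a matching of instance `I`, encoded as a symmetric partial partner
function: `M x = some y` means the edge `{x,y}` belongs to the matching. -/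
def IsMatching {α : Type*} (I : MatP α) (M : α → Option α) : Prop :=
  (∀ x y, M x = some y → I.adj x y) ∧ (∀ x y, M x = some y → M y = some x)

/-- Agent `x` prefers (partner) option `o` to option `o'`:
being matched beats being unmatched, and among partners `x` uses `I.pref`. -/
def Better {α : Type*} (I : MatP α) (x : α) : Option α → Option α → Prop
  | some _, none => True
  | some y, some z => I.pref x y z
  | none, _ => False

/-- The vote of agent `x` between partner options `o` and `o'`. -/
noncomputable def voteO {α : Type*} (I : MatP α) (x : α) (o o' : Option α) : ℤ :=
  if Better I x o o' then 1 else if Better I x o' o then -1 else 0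

/-- Popularity margin `Δ^I(M,M')`: the sum of all agents' votes. -/
noncomputable def margin {α : Type*} [DecidableEq α]
    (I : MatP α) (M M' : α → Option α) : ℤ :=
  ∑ x ∈ I.W ∪ I.F, voteO I x (M x) (M' x)

/-- `M` is popular for `I`: it does not lose against any matching. -/
def Popular {α : Type*} [DecidableEq α] (I : MatP α) (M : α → Option α) : Prop :=
  ∀ M', IsMatching I M' → 0 ≤ margin I M M'

/-- `IA` and `IB` are MatP instances on the same bipartite graph that differ
only in the preference order of the single agent `x`. -/
def SameExcept {α : Type*} (IA IB : MatP α) (x : α) : Prop :=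
  IA.W = IB.W ∧ IA.F = IB.F ∧ IA.adj = IB.adj ∧
  ∀ z, z ≠ x → ∀ u v, (IA.pref z u v ↔ IB.pref z u v)

/-- `IH` is a hybrid instance of `(IA, IB)` with respect to the edge `{x,y}`:
same graph, all agents other than `x` keep their `IA` preferences, and in `x`'s
preference order exactly the agents preferred to `y` in `IA` or in `IB`
are placed above `y`. -/
def IsHybrid {α : Type*} (IA IB IH : MatP α) (x y : α) : Prop :=
  IH.W = IA.W ∧ IH.F = IA.F ∧ IH.adj = IA.adj ∧
  (∀ z, z ≠ x → ∀ u v, (IH.pref z u v ↔ IA.pref z u v)) ∧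
  (∀ z, (IA.pref x z y ∨ IB.pref x z y) → IH.pref x z y) ∧
  (∀ z, IA.adj x z → z ≠ y → ¬(IA.pref x z y ∨ IB.pref x z y) → IH.pref x y z)


section Aux
variable {α : Type*}

lemma better_congr (I I' : MatP α) (z : α)
    (h : ∀ u v, I.pref z u v ↔ I'.pref z u v) :
    ∀ o o', Better I z o o' ↔ Better I' z o o' := by
  intro o o'
  cases o <;> cases o' <;> simp [Better, h]

lemma voteO_congr (I I' : MatP α) (z : α)
    (h : ∀ u v, I.pref z u v ↔ I'.pref z u v) (o o' : Option α) :
    voteO I z o o' = voteO I' z o o' := by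
  simp only [voteO]
  rw [if_congr (better_congr I I' z h o o') rfl
      (if_congr (better_congr I I' z h o' o) rfl rfl)]

lemma voteO_le_one (I : MatP α) (z : α) (o o' : Option α) :
    voteO I z o o' ≤ 1 := by
  simp only [voteO]; split_ifs <;> norm_num

lemma not_pref_of_pref (I : MatP α) (x u v : α) (h : I.pref x u v) :
    ¬ I.pref x v u := fun h' => I.pref_irrefl x u (I.pref_trans x u v u h h')

lemma voteO_neg_of_pref (I : MatP α) (x u v : α) (h : I.pref x v u) :
    voteO I x (some u) (some v) = -1 := by
  have h1 : ¬ Better I x (some u) (some v) := not_pref_of_pref I x v u h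
  have h2 : Better I x (some v) (some u) := h
  simp [voteO, h1, h2]

lemma voteO_x_key (IA IB IH : MatP α) (x y : α)
    (hsame : SameExcept IA IB x) (hH : IsHybrid IA IB IH x y)
    (M' : α → Option α) (hM' : IsMatching IH M') :
    voteO IA x (some y) (M' x) ≤ voteO IH x (some y) (M' x) ∨
    voteO IB x (some y) (M' x) ≤ voteO IH x (some y) (M' x) := by
  obtain ⟨hW, hF, hadj, hrest, hup, hdown⟩ := hH
  cases hz : M' x with
  | none =>
      left
      simp [voteO, Better]
  | some z =>
      by_cases hzy : z = y
      · left
        subst hzy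
        have hA1 : ¬ Better IA x (some z) (some z) := IA.pref_irrefl x z
        have hH1 : ¬ Better IH x (some z) (some z) := IH.pref_irrefl x z
        simp [voteO, hA1, hH1]
      · have hadjxz : IA.adj x z := by
          rw [← hadj]; exact hM'.1 x z hz
        by_cases hAp : IA.pref x z y
        · left
          rw [voteO_neg_of_pref IA x y z hAp,
              voteO_neg_of_pref IH x y z (hup z (Or.inl hAp))]
        · by_cases hBp : IB.pref x z y
          · right
            rw [voteO_neg_of_pref IB x y z hBp,
                voteO_neg_of_pref IH x y z (hup z (Or.inr hBp))]
          · left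
            have hyz : IH.pref x y z := hdown z hadjxz hzy (by tauto)
            have : voteO IH x (some y) (some z) = 1 := by
              simp [voteO, Better, hyz]
            rw [this]
            exact voteO_le_one IA x (some y) (some z)

end Aux

/-- Lemma 2(1): if a matching containing the edge `{x,y}` is popular for both
`IA` and `IB`, then it is popular for the hybrid instance. -/
theorem popular_hybrid_of_robust {α : Type*} [DecidableEq α]
    (IA IB IH : MatP α) (x y : α)
    (hsame : SameExcept IA IB x)
    (he : IA.adj x y)
    (hH : IsHybrid IA IB IH x y)
    (M : α → Option α) (hM : IsMatching IA M) (hMx : M x = some y)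
    (hA : Popular IA M) (hB : Popular IB M) :
    Popular IH M := by
  intro M' hM'
  have hadj : IH.adj = IA.adj := hH.2.2.1
  have hadjB : IA.adj = IB.adj := hsame.2.2.1
  have hM'A : IsMatching IA M' := ⟨fun u v h => by rw [← hadj] at *; exact hM'.1 u v h, hM'.2⟩
  have hM'B : IsMatching IB M' := ⟨fun u v h => by rw [← hadjB]; exact hM'A.1 u v h, hM'.2⟩
  have hset : IH.W ∪ IH.F = IA.W ∪ IA.F := by rw [hH.1, hH.2.1]
  have hsetB : IB.W ∪ IB.F = IA.W ∪ IA.F := by rw [hsame.1, hsame.2.1]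
  have hkey := voteO_x_key IA IB IH x y hsame hH M' hM'
  rw [← hMx] at hkey
  rcases hkey with hk | hk
  · have h1 : margin IA M M' ≤ margin IH M M' := by
      unfold margin
      rw [hset]
      apply Finset.sum_le_sum
      intro z _
      by_cases hzx : z = x
      · subst hzx; exact hk
      · rw [voteO_congr IA IH z (fun u v => (hH.2.2.2.1 z hzx u v).symm)]
    exact le_trans (hA M' hM'A) h1
  · have h1 : margin IB M M' ≤ margin IH M M' := by
      unfold margin
      rw [hset, hsetB]
      apply Finset.sum_le_sum
      intro z _
      by_cases hzx : z = x
      · subst hzx; exact hk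
      · rw [voteO_congr IB IH z
          (fun u v => (hsame.2.2.2 z hzx u v).symm.trans (hH.2.2.2.1 z hzx u v).symm)]
    exact le_trans (hB M' hM'B) h1
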